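/- arXiv:2602.21574 — 4 statements merged into one kernel-verified Lean document; each statement's English description precedes it below -/
import Mathlib

section
/- Let H be a real Hilbert space, and let φ⁺, φ, μ ∈ H, r⁺, r ∈ ℝ, b ∈ H, and τ > 0. Suppose the following three relations hold: (i) ⟪(φ⁺ - φ)/τ, μ⟫ = -‖μ‖², (ii) ⟪μ, (φ⁺ - φ)/τ⟫ = (‖φ⁺‖² - ‖φ‖² + ‖φ⁺ - φ‖²)/(2τ) + r⁺ ⟪b, (φ⁺ - φ)/τ⟫, and (iii) ((r⁺)² - r² + (r⁺ - r)²)/τ = r⁺ ⟪b, (φ⁺ - φ)/τ⟫. Then (‖φ⁺‖²/2 + (r⁺)²) - (‖φ‖²/2 + r²) + ‖φ⁺ - φ‖²/2 + (r⁺ - r)² = -τ ‖μ‖². -/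
theorem sav_discrete_energy_identity_general
    {H : Type*} [NormedAddCommGroup H] [InnerProductSpace ℝ H]
    (φplus φ μ b : H) (rplus r τ : ℝ) (hτ : 0 < τ)
    (h1 : (inner ℝ ((τ⁻¹ : ℝ) • (φplus - φ)) μ : ℝ) = -‖μ‖ ^ 2)
    (h2 : (inner ℝ μ ((τ⁻¹ : ℝ) • (φplus - φ)) : ℝ) =
      (‖φplus‖ ^ 2 - ‖φ‖ ^ 2 + ‖φplus - φ‖ ^ 2) / (2 * τ)
        + rplus * (inner ℝ b ((τ⁻¹ : ℝ) • (φplus - φ)) : ℝ))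
    (h3 : (rplus ^ 2 - r ^ 2 + (rplus - r) ^ 2) / τ =
      rplus * (inner ℝ b ((τ⁻¹ : ℝ) • (φplus - φ)) : ℝ)) :
    (‖φplus‖ ^ 2 / 2 + rplus ^ 2) - (‖φ‖ ^ 2 / 2 + r ^ 2)
      + ‖φplus - φ‖ ^ 2 / 2 + (rplus - r) ^ 2 = -τ * ‖μ‖ ^ 2 := by
  have hdissipation : (inner ℝ μ ((τ⁻¹ : ℝ) • (φplus - φ)) : ℝ) = -‖μ‖ ^ 2 := by
    rwa [real_inner_comm]
  rw [hdissipation, ← h3] at h2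
  field_simp at h2
  linarith

theorem sav_discrete_energy_identity
    {H : Type*} [NormedAddCommGroup H] [InnerProductSpace ℝ H] [CompleteSpace H]
    (φplus φ μ b : H) (rplus r τ : ℝ) (hτ : 0 < τ)
    (h1 : (inner ℝ ((τ⁻¹ : ℝ) • (φplus - φ)) μ : ℝ) = -‖μ‖ ^ 2)
    (h2 : (inner ℝ μ ((τ⁻¹ : ℝ) • (φplus - φ)) : ℝ) =
      (‖φplus‖ ^ 2 - ‖φ‖ ^ 2 + ‖φplus - φ‖ ^ 2) / (2 * τ)
        + rplus * (inner ℝ b ((τ⁻¹ : ℝ) • (φplus - φ)) : ℝ))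
    (h3 : (rplus ^ 2 - r ^ 2 + (rplus - r) ^ 2) / τ =
      rplus * (inner ℝ b ((τ⁻¹ : ℝ) • (φplus - φ)) : ℝ)) :
    (‖φplus‖ ^ 2 / 2 + rplus ^ 2) - (‖φ‖ ^ 2 / 2 + r ^ 2)
      + ‖φplus - φ‖ ^ 2 / 2 + (rplus - r) ^ 2 = -τ * ‖μ‖ ^ 2 :=
  sav_discrete_energy_identity_general φplus φ μ b rplus r τ hτ h1 h2 h3
end

section
/- Under the hypotheses of the abstract discrete SAV energy identity, the discrete total energy is monotonically nonincreasing: ‖φ⁺‖²/2 + (r⁺)² ≤ ‖φ‖²/2 + r². -/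
/-! Adding the three identities cancels the coupling terms `r⁺⟪b, (φ⁺ - φ)/τ⟫`: the energy
increment plus the numerical dissipation `‖φ⁺ - φ‖²/2 + (r⁺ - r)²`, divided by `τ`, equals
`-‖μ‖² ≤ 0`. -/

theorem half_sq_add_sq_le_of_increment_nonpos {a a' e r r' τ : ℝ} (hτ : 0 < τ) (he : 0 ≤ e)
    (h : (a' ^ 2 - a ^ 2 + e) / (2 * τ) + (r' ^ 2 - r ^ 2 + (r' - r) ^ 2) / τ ≤ 0) :
    a' ^ 2 / 2 + r' ^ 2 ≤ a ^ 2 / 2 + r ^ 2 := by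
  have hscaled : ((a' ^ 2 - a ^ 2 + e) / 2 + (r' ^ 2 - r ^ 2 + (r' - r) ^ 2)) / τ ≤ 0 := by
    convert h using 1
    field_simp
  have hincrement := (div_le_iff₀ hτ).1 hscaled
  linarith [sq_nonneg (r' - r)]

theorem sav_discrete_energy_decay_general
    {H : Type*} [NormedAddCommGroup H] [InnerProductSpace ℝ H]
    (φplus φ μ b : H) (rplus r τ : ℝ) (hτ : 0 < τ)
    (h1 : (inner ℝ ((τ⁻¹ : ℝ) • (φplus - φ)) μ : ℝ) = -‖μ‖ ^ 2)
    (h2 : (inner ℝ μ ((τ⁻¹ : ℝ) • (φplus - φ)) : ℝ) =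
      (‖φplus‖ ^ 2 - ‖φ‖ ^ 2 + ‖φplus - φ‖ ^ 2) / (2 * τ)
        + rplus * (inner ℝ b ((τ⁻¹ : ℝ) • (φplus - φ)) : ℝ))
    (h3 : (rplus ^ 2 - r ^ 2 + (rplus - r) ^ 2) / τ =
      rplus * (inner ℝ b ((τ⁻¹ : ℝ) • (φplus - φ)) : ℝ)) :
    ‖φplus‖ ^ 2 / 2 + rplus ^ 2 ≤ ‖φ‖ ^ 2 / 2 + r ^ 2 := by
  have hdissipation : (‖φplus‖ ^ 2 - ‖φ‖ ^ 2 + ‖φplus - φ‖ ^ 2) / (2 * τ)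
      + (rplus ^ 2 - r ^ 2 + (rplus - r) ^ 2) / τ = -‖μ‖ ^ 2 := by
    rw [h3, ← h2, real_inner_comm, h1]
  refine half_sq_add_sq_le_of_increment_nonpos hτ (sq_nonneg ‖φplus - φ‖) ?_
  rw [hdissipation]
  exact neg_nonpos.2 (sq_nonneg _)

theorem sav_discrete_energy_decay
    {H : Type*} [NormedAddCommGroup H] [InnerProductSpace ℝ H] [CompleteSpace H]
    (φplus φ μ b : H) (rplus r τ : ℝ) (hτ : 0 < τ)
    (h1 : (inner ℝ ((τ⁻¹ : ℝ) • (φplus - φ)) μ : ℝ) = -‖μ‖ ^ 2)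
    (h2 : (inner ℝ μ ((τ⁻¹ : ℝ) • (φplus - φ)) : ℝ) =
      (‖φplus‖ ^ 2 - ‖φ‖ ^ 2 + ‖φplus - φ‖ ^ 2) / (2 * τ)
        + rplus * (inner ℝ b ((τ⁻¹ : ℝ) • (φplus - φ)) : ℝ))
    (h3 : (rplus ^ 2 - r ^ 2 + (rplus - r) ^ 2) / τ =
      rplus * (inner ℝ b ((τ⁻¹ : ℝ) • (φplus - φ)) : ℝ)) :
    ‖φplus‖ ^ 2 / 2 + rplus ^ 2 ≤ ‖φ‖ ^ 2 / 2 + r ^ 2 :=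
  sav_discrete_energy_decay_general φplus φ μ b rplus r τ hτ h1 h2 h3
end

section
/- Let V be a finite-dimensional real inner product space with inner product ⟪·,·⟫ and a seminorm induced by a positive semidefinite symmetric bilinear form a(·,·) (representing ⟪∇·,∇·⟫). Let b ∈ V, r ∈ ℝ unknowns, τ > 0. Suppose (φ, μ, r) ∈ V × V × ℝ satisfies the homogeneous system: (1) ⟪φ, u⟫ + τ a(μ, u) = 0 for all u ∈ V; (2) ⟪μ, v⟫ - a(φ, v) - r⟪b, v⟫ = 0 for all v ∈ V; (3) r - ⟪b/2, φ⟫ = 0 (i.e., r = ½⟪b, φ⟫). Then φ = 0, μ = 0, and r = 0. -/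
/-!
Testing the first equation with `μ`, the second with `φ` and using `r = ½⟪b, φ⟫` gives the energy
identity `a(φ, φ) + τ a(μ, μ) + 2 r² = 0`, so `a(φ, φ) = 0`. By Cauchy–Schwarz for the positive
semidefinite form `a`, then `a(φ, ·) = 0`; the first equation tested with `φ` gives `‖φ‖² = 0`,
whence `r = 0`, and the second equation tested with `μ` gives `‖μ‖² = 0`.
-/

open LinearMap (BilinForm)

theorem sav_energy_identity {V : Type*} [NormedAddCommGroup V] [InnerProductSpace ℝ V]
    (a : BilinForm ℝ V) {b φ μ : V} {τ r : ℝ}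
    (h1 : ∀ u : V, (inner ℝ φ u : ℝ) + τ * a μ u = 0)
    (h2 : ∀ v : V, (inner ℝ μ v : ℝ) - a φ v - r * (inner ℝ b v : ℝ) = 0)
    (h3 : r - (inner ℝ ((2⁻¹ : ℝ) • b) φ : ℝ) = 0) :
    a φ φ + τ * a μ μ + 2 * r ^ 2 = 0 := by
  have hbφ : (inner ℝ b φ : ℝ) = 2 * r := by
    rw [real_inner_smul_left] at h3
    linarith
  have e1 := h1 μ
  have e2 := h2 φ
  rw [real_inner_comm, hbφ] at e2
  linear_combination e1 - e2

theorem sav_homogeneous_trivial_solution_general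
    {V : Type*} [NormedAddCommGroup V] [InnerProductSpace ℝ V]
    (a : V →ₗ[ℝ] V →ₗ[ℝ] ℝ)
    (ha_symm : ∀ x y : V, a x y = a y x)
    (ha_psd : ∀ x : V, 0 ≤ a x x)
    (b : V) (τ : ℝ) (hτ : 0 < τ)
    (φ μ : V) (r : ℝ)
    (h1 : ∀ u : V, (inner ℝ φ u : ℝ) + τ * a μ u = 0)
    (h2 : ∀ v : V, (inner ℝ μ v : ℝ) - a φ v - r * (inner ℝ b v : ℝ) = 0)
    (h3 : r - (inner ℝ ((2⁻¹ : ℝ) • b) φ : ℝ) = 0) :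
    φ = 0 ∧ μ = 0 ∧ r = 0 := by
  have henergy := sav_energy_identity a h1 h2 h3
  have haφφ : a φ φ = 0 := by
    linarith [ha_psd φ, mul_nonneg hτ.le (ha_psd μ), sq_nonneg r]
  have haφ : a φ = 0 :=
    (BilinForm.apply_apply_same_eq_zero_iff a ha_psd ⟨ha_symm⟩).mp haφφ
  have hφ : φ = 0 := by
    have h := h1 φ
    rw [ha_symm, haφ, LinearMap.zero_apply, mul_zero, add_zero] at h
    exact inner_self_eq_zero.mp h
  have hr : r = 0 := by
    simpa [hφ] using h3
  have hμ : μ = 0 := by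
    have h := h2 μ
    rw [hφ, hr, map_zero, LinearMap.zero_apply, zero_mul, sub_zero, sub_zero] at h
    exact inner_self_eq_zero.mp h
  exact ⟨hφ, hμ, hr⟩

theorem sav_homogeneous_trivial_solution
    {V : Type*} [NormedAddCommGroup V] [InnerProductSpace ℝ V] [FiniteDimensional ℝ V]
    (a : V →ₗ[ℝ] V →ₗ[ℝ] ℝ)
    (ha_symm : ∀ x y : V, a x y = a y x)
    (ha_psd : ∀ x : V, 0 ≤ a x x)
    (b : V) (τ : ℝ) (hτ : 0 < τ)
    (φ μ : V) (r : ℝ)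
    (h1 : ∀ u : V, (inner ℝ φ u : ℝ) + τ * a μ u = 0)
    (h2 : ∀ v : V, (inner ℝ μ v : ℝ) - a φ v - r * (inner ℝ b v : ℝ) = 0)
    (h3 : r - (inner ℝ ((2⁻¹ : ℝ) • b) φ : ℝ) = 0) :
    φ = 0 ∧ μ = 0 ∧ r = 0 :=
  sav_homogeneous_trivial_solution_general a ha_symm ha_psd b τ hτ φ μ r h1 h2 h3
end

section
/- Suppose (φ_h^{n+1}, μ_h^{n+1}, r_h^{n+1}) solves the coupled linear SAV system, and let (φ_{1}, μ_{1}) and (φ_{2}, μ_{2}) solve the two decoupled constant-coefficient systems: (φ₁,u) + τ(∇μ₁,∇u) = (φ_h^n, u), (μ₁,v) - (∇φ₁,∇v) = 0, and (φ₂,u) + τ(∇μ₂,∇u) = 0, (μ₂,v) - (∇φ₂,∇v) = (b, v) for all u, v in the finite element space V_h, where b = F'(φ_h^n)/√(E(φ_h^n)). If 1 - ⟪b/2, φ₂⟫ ≠ 0, then with r* = (⟪b/2, φ₁ - φ_h^n⟫ + r_h^n)/(1 - ⟪b/2, φ₂⟫), the triple (φ₁ + r* φ₂, μ₁ + r* μ₂,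 r*) satisfies the coupled SAV system; i.e., the decoupled solution algorithm is consistent with the coupled scheme. -/
/-! For fixed `r⁺` the coupled system is linear in `(φ⁺, μ⁺)`, so `(φ₁ + r φ₂, μ₁ + r μ₂)` solves
its first two equations for every `r`. Substituting this into the third equation leaves a linear
equation in `r` with leading coefficient `1 - ⟪b/2, φ₂⟫`, whose solution is `r*`. -/

open scoped InnerProductSpace

section Superposition

variable {V : Type*} [NormedAddCommGroup V] [InnerProductSpace ℝ V]

theorem inner_add_mul_bilin_add_smul (g : V →ₗ[ℝ] V →ₗ[ℝ] ℝ) (a r : ℝ) (φ₁ φ₂ μ₁ μ₂ u : V) :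
    ⟪φ₁ + r • φ₂, u⟫_ℝ + a * g (μ₁ + r • μ₂) u
      = (⟪φ₁, u⟫_ℝ + a * g μ₁ u) + r * (⟪φ₂, u⟫_ℝ + a * g μ₂ u) := by
  simp only [inner_add_left, real_inner_smul_left, map_add, map_smul, LinearMap.add_apply,
    LinearMap.smul_apply, smul_eq_mul]
  ring

theorem sub_inner_add_smul_div_eq (c φ₁ φ₂ φₙ : V) (rₙ : ℝ) (hden : 1 - ⟪c, φ₂⟫_ℝ ≠ 0) :
    let r := (⟪c, φ₁ - φₙ⟫_ℝ + rₙ) / (1 - ⟪c, φ₂⟫_ℝ)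
    r - ⟪c, φ₁ + r • φ₂⟫_ℝ = rₙ - ⟪c, φₙ⟫_ℝ := by
  intro r
  have hr : r * (1 - ⟪c, φ₂⟫_ℝ) = ⟪c, φ₁ - φₙ⟫_ℝ + rₙ := div_mul_cancel₀ _ hden
  rw [inner_sub_right] at hr
  rw [inner_add_right, real_inner_smul_right]
  linear_combination hr

end Superposition

theorem sav_decoupled_algorithm_consistency_general
    {V : Type*} [NormedAddCommGroup V] [InnerProductSpace ℝ V]
    (g : V →ₗ[ℝ] V →ₗ[ℝ] ℝ)
    (b φn : V) (rn τ : ℝ)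
    (φ1 μ1 φ2 μ2 : V)
    (hsys1a : ∀ u : V, (inner ℝ φ1 u : ℝ) + τ * g μ1 u = (inner ℝ φn u : ℝ))
    (hsys1b : ∀ v : V, (inner ℝ μ1 v : ℝ) - g φ1 v = 0)
    (hsys2a : ∀ u : V, (inner ℝ φ2 u : ℝ) + τ * g μ2 u = 0)
    (hsys2b : ∀ v : V, (inner ℝ μ2 v : ℝ) - g φ2 v = (inner ℝ b v : ℝ))
    (hden : 1 - (inner ℝ ((2⁻¹ : ℝ) • b) φ2 : ℝ) ≠ 0) :
    let rstar := ((inner ℝ ((2⁻¹ : ℝ) • b) (φ1 - φn) : ℝ) + rn) /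
      (1 - (inner ℝ ((2⁻¹ : ℝ) • b) φ2 : ℝ))
    (∀ u : V, (inner ℝ (φ1 + rstar • φ2) u : ℝ) + τ * g (μ1 + rstar • μ2) u
        = (inner ℝ φn u : ℝ)) ∧
    (∀ v : V, (inner ℝ (μ1 + rstar • μ2) v : ℝ)
        = g (φ1 + rstar • φ2) v + rstar * (inner ℝ b v : ℝ)) ∧
    rstar - (inner ℝ ((2⁻¹ : ℝ) • b) (φ1 + rstar • φ2) : ℝ)
        = rn - (inner ℝ ((2⁻¹ : ℝ) • b) φn : ℝ) := by
  intro rstar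
  refine ⟨fun u => ?_, fun v => ?_, sub_inner_add_smul_div_eq _ _ _ _ _ hden⟩
  · rw [inner_add_mul_bilin_add_smul, hsys1a, hsys2a, mul_zero, add_zero]
  · have h := inner_add_mul_bilin_add_smul g (-1) rstar μ1 μ2 φ1 φ2 v
    linear_combination h + hsys1b v + rstar * hsys2b v

theorem sav_decoupled_algorithm_consistency
    {V : Type*} [NormedAddCommGroup V] [InnerProductSpace ℝ V] [FiniteDimensional ℝ V]
    (g : V →ₗ[ℝ] V →ₗ[ℝ] ℝ)
    (hg_symm : ∀ x y : V, g x y = g y x)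
    (hg_psd : ∀ x : V, 0 ≤ g x x)
    (b φn : V) (rn τ : ℝ) (hτ : 0 < τ)
    (φ1 μ1 φ2 μ2 : V)
    (hsys1a : ∀ u : V, (inner ℝ φ1 u : ℝ) + τ * g μ1 u = (inner ℝ φn u : ℝ))
    (hsys1b : ∀ v : V, (inner ℝ μ1 v : ℝ) - g φ1 v = 0)
    (hsys2a : ∀ u : V, (inner ℝ φ2 u : ℝ) + τ * g μ2 u = 0)
    (hsys2b : ∀ v : V, (inner ℝ μ2 v : ℝ) - g φ2 v = (inner ℝ b v : ℝ))
    (hden : 1 - (inner ℝ ((2⁻¹ : ℝ) • b) φ2 : ℝ) ≠ 0) :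
    let rstar := ((inner ℝ ((2⁻¹ : ℝ) • b) (φ1 - φn) : ℝ) + rn) /
      (1 - (inner ℝ ((2⁻¹ : ℝ) • b) φ2 : ℝ))
    (∀ u : V, (inner ℝ (φ1 + rstar • φ2) u : ℝ) + τ * g (μ1 + rstar • μ2) u
        = (inner ℝ φn u : ℝ)) ∧
    (∀ v : V, (inner ℝ (μ1 + rstar • μ2) v : ℝ)
        = g (φ1 + rstar • φ2) v + rstar * (inner ℝ b v : ℝ)) ∧
    rstar - (inner ℝ ((2⁻¹ : ℝ) • b) (φ1 + rstar • φ2) : ℝ)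
        = rn - (inner ℝ ((2⁻¹ : ℝ) • b) φn : ℝ) :=
  sav_decoupled_algorithm_consistency_general g b φn rn τ φ1 μ1 φ2 μ2 hsys1a hsys1b hsys2a hsys2b
    hden
end
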